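/- Star-shaped visibility condition: let Γ_box ⊂ ℝ² be a compact set with c in its interior such that every point z ∈ ∂Γ_box satisfies [c, z] ∩ ∂Γ_box = {z}. Then Γ_box is star-shaped with respect to c, i.e. for every z ∈ Γ_box the segment [c, z] is contained in Γ_box. -/
import Mathlib

lemma cross_frontier {E : Type*} [TopologicalSpace E] {Γ s : Set E}
    (hclosed : IsClosed Γ) (hs : IsPreconnected s)
    (h1 : (s ∩ Γ).Nonempty) (h2 : (s \ Γ).Nonempty) :
    (s ∩ frontier Γ).Nonempty := by
  by_contra h
  rw [Set.not_nonempty_iff_eq_empty] at h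
  have hfront : frontier Γ = Γ \ interior Γ := hclosed.frontier_eq
  have hsub : s ⊆ interior Γ ∪ Γᶜ := by
    intro x hx
    by_cases hxΓ : x ∈ Γ
    · left
      by_contra hxi
      exact (Set.eq_empty_iff_forall_notMem.1 h x)
        ⟨hx, hfront ▸ ⟨hxΓ, hxi⟩⟩
    · exact Or.inr hxΓ
  obtain ⟨a, ha, haΓ⟩ := h1
  have hai : a ∈ interior Γ := by
    rcases hsub ha with h' | h'
    · exact h'
    · exact absurd haΓ h'
  obtain ⟨b, hb, hbΓ⟩ := h2
  obtain ⟨x, -, hx1, hx2⟩ := hs (interior Γ) Γᶜ isOpen_interior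
    hclosed.isOpen_compl hsub ⟨a, ha, hai⟩ ⟨b, hb, hbΓ⟩
  exact hx2 (interior_subset hx1)

/-- Star-shaped visibility condition: if `Γ` is a compact subset of the plane
with `c` in its interior and every boundary point `z` satisfies
`[c, z] ∩ ∂Γ = {z}`, then `Γ` is star-shaped with respect to `c`. -/
theorem visibility_implies_starShaped
    (Γ : Set (EuclideanSpace ℝ (Fin 2))) (c : EuclideanSpace ℝ (Fin 2))
    (hcomp : IsCompact Γ) (hc : c ∈ interior Γ)
    (hvis : ∀ z ∈ frontier Γ, segment ℝ c z ∩ frontier Γ = {z}) :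
    ∀ z ∈ Γ, segment ℝ c z ⊆ Γ := by
  have hclosed : IsClosed Γ := hcomp.isClosed
  intro z hz w hw
  by_contra hwΓ
  have hcwz : Wbtw ℝ c w z := mem_segment_iff_wbtw.1 hw
  -- segment from c to w crosses the frontier at p
  obtain ⟨p, hpseg, hpf⟩ := cross_frontier hclosed
    (convex_segment c w).isPreconnected
    ⟨c, left_mem_segment ℝ c w, interior_subset hc⟩
    ⟨w, right_mem_segment ℝ c w, hwΓ⟩
  -- segment from w to z crosses the frontier at q
  obtain ⟨q, hqseg, hqf⟩ := cross_frontier hclosed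
    (convex_segment w z).isPreconnected
    ⟨z, right_mem_segment ℝ w z, hz⟩
    ⟨w, left_mem_segment ℝ w z, hwΓ⟩
  have hcpw : Wbtw ℝ c p w := mem_segment_iff_wbtw.1 hpseg
  have hwqz : Wbtw ℝ w q z := mem_segment_iff_wbtw.1 hqseg
  have hcwq : Wbtw ℝ c w q := hcwz.trans_right_left hwqz
  have hcpq : Wbtw ℝ c p q := hcwq.trans_left hcpw
  have hpq : p = q := by
    have := hvis q hqf
    have hp : p ∈ segment ℝ c q ∩ frontier Γ := ⟨hcpq.mem_segment, hpf⟩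
    rw [this] at hp
    exact hp
  subst hpq
  -- now p ∈ [c, w] and p ∈ [w, z]; hence p = w
  have hpwz : Wbtw ℝ p w z := hcwz.trans_left_right hcpw
  have hwp : w = p := (wbtw_swap_left_iff ℝ z).1 ⟨hwqz, hpwz⟩
  exact hwΓ (hclosed.frontier_subset (hwp ▸ hpf))
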